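/- arXiv:1512.00703 — 3 statements merged into one kernel-verified Lean document; each statement's English description precedes it below -/
import Mathlib

section
/- Let A₁ and A₂ be Archimedean f-algebras with unit elements e₁ and e₂, and let T : A₁ × A₂ → ℝ be a Riesz bimorphism with T(e₁, e₂) = 1. Then T is multiplicative: T(a₁x₁, a₂x₂) = T(a₁, a₂)·T(x₁, x₂) for all aᵢ, xᵢ ∈ Aᵢ. -/
/-!
Put `φ = T(·, 1)` and `ψ = T(1, ·)`, real Riesz homomorphisms with `φ 1 = ψ 1 = 1`.
In a unital f-algebra, `n • (y - n • 1)⁺ ≤ y * y` for `y ≥ 0`, so a positive functional vanishing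
at `1` vanishes identically. Hence a positive functional `Φ` vanishing on the positive elements
of `ker φ` equals `Φ 1 • φ` (compare `n • x` with `⌈n φ x⌉ • 1`). Applied to `x ↦ T x y` this gives
`T x y = φ x * ψ y`, and applied to `x ↦ φ (x * y)` it shows that `φ` and `ψ` are multiplicative.
-/

structure IsFAlgebra (A : Type*) [Ring A] [Lattice A] : Prop where
  mul_nonneg : ∀ x y : A, 0 ≤ x → 0 ≤ y → 0 ≤ x * y
  mul_inf_eq_zero : ∀ f g h : A, f ⊓ g = 0 → 0 ≤ h → (f * h) ⊓ g = 0 ∧ (h * f) ⊓ g = 0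

section LatticeOrderedGroup

variable {A : Type*} [AddCommGroup A] [Lattice A] [AddLeftMono A]

theorem AddMonoidHom.ext_nonneg {B : Type*} [AddGroup B] {f g : A →+ B}
    (h : ∀ a, 0 ≤ a → f a = g a) : f = g := by
  ext a
  rw [← posPart_sub_negPart a, map_sub, map_sub, h _ (posPart_nonneg a), h _ (negPart_nonneg a)]

variable {φ : A →+ ℝ}

theorem map_nonneg_of_map_abs (hφ : ∀ a, φ |a| = |φ a|) {a : A} (ha : 0 ≤ a) : 0 ≤ φ a := by
  rw [← abs_of_nonneg ha, hφ]
  exact abs_nonneg _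

theorem map_posPart_eq_zero_of_nonpos (hφ : ∀ a, φ |a| = |φ a|) {a : A} (ha : φ a ≤ 0) :
    φ a⁺ = 0 := by
  have h := congrArg φ (add_abs_eq_two_nsmul_posPart a)
  rw [map_add, hφ, abs_of_nonpos ha, map_nsmul] at h
  simpa using h.symm

theorem eq_mul_of_vanishes_on_nonneg_ker (hφ : ∀ a, φ |a| = |φ a|) {e : A} (he : φ e = 1)
    {Φ : A →+ ℝ} (hΦ : ∀ a, 0 ≤ a → 0 ≤ Φ a) (hker : ∀ u, 0 ≤ u → φ u = 0 → Φ u = 0)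
    (x : A) : Φ x = φ x * Φ e := by
  have upper : ∀ x, Φ x ≤ φ x * Φ e := by
    intro x
    -- `z = n • x - ⌈n φ x⌉ • e` has `φ z ≤ 0`, hence `Φ z ≤ Φ z⁺ = 0`
    have bound : ∀ n : ℕ, n * (Φ x - φ x * Φ e) ≤ |Φ e| := by
      intro n
      set m : ℤ := ⌈n * φ x⌉
      have hm₀ : 0 ≤ (m : ℝ) - n * φ x := sub_nonneg.2 (Int.le_ceil _)
      have hm₁ : (m : ℝ) - n * φ x ≤ 1 := by linarith [Int.ceil_lt_add_one ((n : ℝ) * φ x)]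
      set z : A := n • x - m • e
      have hφz : φ z ≤ 0 := by
        simp only [z, map_sub, map_nsmul, map_zsmul, he, nsmul_eq_mul, zsmul_eq_mul, mul_one]
        linarith
      have hΦz : Φ z ≤ 0 := by
        have := hΦ _ (sub_nonneg.2 (le_posPart z))
        rw [map_sub, hker _ (posPart_nonneg z) (map_posPart_eq_zero_of_nonpos hφ hφz)] at this
        linarith
      have hfrac : ((m : ℝ) - n * φ x) * Φ e ≤ |Φ e| :=
        calc ((m : ℝ) - n * φ x) * Φ e ≤ ((m : ℝ) - n * φ x) * |Φ e| :=
              mul_le_mul_of_nonneg_left (le_abs_self _) hm₀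
          _ ≤ |Φ e| := mul_le_of_le_one_left (abs_nonneg _) hm₁
      simp only [z, map_sub, map_nsmul, map_zsmul, nsmul_eq_mul, zsmul_eq_mul] at hΦz
      linarith
    by_contra! hlt
    obtain ⟨n, hn⟩ := exists_nat_gt (|Φ e| / (Φ x - φ x * Φ e))
    rw [div_lt_iff₀ (sub_pos.2 hlt)] at hn
    linarith [bound n]
  have lower := upper (-x)
  rw [map_neg, map_neg] at lower
  linarith [upper x]

end LatticeOrderedGroup

namespace IsFAlgebra

variable {A : Type*} [Ring A] [Lattice A]

theorem mul_eq_zero_of_inf_eq_zero (hA : IsFAlgebra A) {x y : A} (hx : 0 ≤ x) (hy : 0 ≤ y)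
    (hxy : x ⊓ y = 0) : x * y = 0 := by
  -- `x * y` is disjoint from `y`, hence from `x * y`
  have hxy_y : (x * y) ⊓ y = 0 := (hA.mul_inf_eq_zero x y y hxy hy).1
  simpa using (hA.mul_inf_eq_zero y (x * y) x (by rwa [inf_comm]) hx).2

theorem zero_le_one [AddLeftMono A] (hA : IsFAlgebra A) : (0 : A) ≤ 1 := by
  have h₁ : (1 : A)⁺ * 1⁻ = 0 :=
    hA.mul_eq_zero_of_inf_eq_zero (posPart_nonneg _) (negPart_nonneg _)
      (posPart_inf_negPart_eq_zero _)
  have h₂ : (1 : A)⁻ * 1⁺ = 0 :=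
    hA.mul_eq_zero_of_inf_eq_zero (negPart_nonneg _) (posPart_nonneg _)
      (by rw [inf_comm, posPart_inf_negPart_eq_zero])
  have hsq : (1 : A) = 1⁺ * 1⁺ + 1⁻ * 1⁻ := by
    conv_lhs => rw [← mul_one (1 : A), ← posPart_sub_negPart (1 : A)]
    rw [sub_mul, mul_sub, mul_sub, h₁, h₂]
    abel
  rw [hsq]
  exact add_nonneg (hA.mul_nonneg _ _ (posPart_nonneg _) (posPart_nonneg _))
    (hA.mul_nonneg _ _ (negPart_nonneg _) (negPart_nonneg _))

theorem nsmul_posPart_sub_le_mul_self [AddLeftMono A] (hA : IsFAlgebra A) {y : A} (hy : 0 ≤ y)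
    (n : ℕ) : n • (y - n • 1)⁺ ≤ y * y := by
  set z := y - n • (1 : A)
  have hz : z⁺ * z⁻ = 0 :=
    hA.mul_eq_zero_of_inf_eq_zero (posPart_nonneg _) (negPart_nonneg _)
      (posPart_inf_negPart_eq_zero _)
  have hzy : z⁺ ≤ y :=
    (posPart_mono (sub_le_self _ (nsmul_nonneg hA.zero_le_one n))).trans_eq
      (posPart_of_nonneg hy)
  calc n • z⁺ = z⁺ * (n • 1) := by
        rw [nsmul_eq_mul, nsmul_eq_mul, mul_one, (Nat.cast_commute n z⁺).eq]
    _ ≤ z⁺ * y := by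
        have hzz : z⁺ * z = z⁺ * z⁺ := by
          calc z⁺ * z = z⁺ * (z⁺ - z⁻) := by rw [posPart_sub_negPart]
            _ = z⁺ * z⁺ := by rw [mul_sub, hz, sub_zero]
        have := hA.mul_nonneg _ _ (posPart_nonneg z) (posPart_nonneg z)
        rwa [← hzz, mul_sub, sub_nonneg] at this
    _ ≤ y * y := by
        have := hA.mul_nonneg _ _ (sub_nonneg.2 hzy) hy
        rwa [sub_mul, sub_nonneg] at this

theorem eq_zero_of_map_one_eq_zero [AddLeftMono A] (hA : IsFAlgebra A) {L : A →+ ℝ}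
    (hL : ∀ a, 0 ≤ a → 0 ≤ L a) (hL1 : L 1 = 0) {y : A} (hy : 0 ≤ y) : L y = 0 := by
  have mono : ∀ a b : A, a ≤ b → L a ≤ L b := fun a b hab => by
    simpa using hL _ (sub_nonneg.2 hab)
  have bound : ∀ n : ℕ, n * L y ≤ L (y * y) := by
    intro n
    have hsplit : L y = L (y ⊓ n • 1) + L (y - n • 1)⁺ := by
      rw [← map_add, inf_eq_sub_posPart_sub, sub_add_cancel]
    have hinf : L (y ⊓ n • 1) ≤ 0 := by
      simpa only [map_nsmul, hL1, smul_zero] using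
        mono _ _ (inf_le_right : y ⊓ n • (1 : A) ≤ n • 1)
    have hpos : n * L (y - n • 1)⁺ ≤ L (y * y) := by
      have := mono _ _ (hA.nsmul_posPart_sub_le_mul_self hy n)
      rwa [map_nsmul, nsmul_eq_mul] at this
    nlinarith [hL _ (posPart_nonneg (y - n • 1)), (Nat.cast_nonneg n : (0 : ℝ) ≤ n)]
  refine le_antisymm ?_ (hL y hy)
  by_contra! hlt
  obtain ⟨n, hn⟩ := exists_nat_gt (L (y * y) / L y)
  rw [div_lt_iff₀ hlt] at hn
  linarith [bound n]

theorem map_mul [AddLeftMono A] (hA : IsFAlgebra A) {φ : A →+ ℝ} (hφ : ∀ a, φ |a| = |φ a|)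
    (h1 : φ 1 = 1) (x y : A) : φ (x * y) = φ x * φ y := by
  suffices φ.comp (AddMonoidHom.mulLeft x) = (AddMonoidHom.mulLeft (φ x)).comp φ from
    DFunLike.congr_fun this y
  refine AddMonoidHom.ext_nonneg fun y hy => ?_
  have key := eq_mul_of_vanishes_on_nonneg_ker hφ h1 (Φ := φ.comp (AddMonoidHom.mulRight y))
    (fun a ha => map_nonneg_of_map_abs hφ (hA.mul_nonneg _ _ ha hy))
    (fun u hu hφu => hA.eq_zero_of_map_one_eq_zero (L := φ.comp (AddMonoidHom.mulLeft u))
      (fun b hb => map_nonneg_of_map_abs hφ (hA.mul_nonneg _ _ hu hb)) (by simpa using hφu) hy) x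
  simpa using key

end IsFAlgebra

theorem apply_eq_apply_one_mul_apply_one {A₁ A₂ : Type*}
    [AddCommGroup A₁] [One A₁] [Lattice A₁] [AddLeftMono A₁]
    [Ring A₂] [Lattice A₂] [AddLeftMono A₂] (hA₂ : IsFAlgebra A₂) {T : A₁ →+ A₂ →+ ℝ}
    (hT₁ : ∀ y, 0 ≤ y → ∀ x, T |x| y = |T x y|) (hT₂ : ∀ x, 0 ≤ x → ∀ y, T x |y| = |T x y|)
    (hT : T 1 1 = 1) (x : A₁) (y : A₂) : T x y = T x 1 * T 1 y := by
  suffices T x = (AddMonoidHom.mulLeft (T x 1)).comp (T 1) from DFunLike.congr_fun this y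
  refine AddMonoidHom.ext_nonneg fun y hy => ?_
  exact eq_mul_of_vanishes_on_nonneg_ker (φ := T.flip 1) (hT₁ 1 hA₂.zero_le_one) hT (Φ := T.flip y)
    (fun a ha => map_nonneg_of_map_abs (hT₂ a ha) hy)
    (fun u hu hu₀ => hA₂.eq_zero_of_map_one_eq_zero
      (fun b hb => map_nonneg_of_map_abs (hT₂ u hu) hb) hu₀ hy) x

theorem riesz_bimorphism_real_multiplicative_general
    {A₁ A₂ : Type*}
    [Ring A₁] [Lattice A₁] [CovariantClass A₁ A₁ (· + ·) (· ≤ ·)] [Module ℝ A₁]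
    [Ring A₂] [Lattice A₂] [CovariantClass A₂ A₂ (· + ·) (· ≤ ·)] [Module ℝ A₂]
    (h₁mulpos : ∀ x y : A₁, 0 ≤ x → 0 ≤ y → 0 ≤ x * y)
    (h₁falg : ∀ f g h : A₁, f ⊓ g = 0 → 0 ≤ h → (f * h) ⊓ g = 0 ∧ (h * f) ⊓ g = 0)
    (h₂mulpos : ∀ x y : A₂, 0 ≤ x → 0 ≤ y → 0 ≤ x * y)
    (h₂falg : ∀ f g h : A₂, f ⊓ g = 0 → 0 ≤ h → (f * h) ⊓ g = 0 ∧ (h * f) ⊓ g = 0)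
    (T : A₁ →ₗ[ℝ] A₂ →ₗ[ℝ] ℝ)
    -- `T` is a Riesz bimorphism:
    (hbim₁ : ∀ y : A₂, 0 ≤ y → ∀ x : A₁, T |x| y = |T x y|)
    (hbim₂ : ∀ x : A₁, 0 ≤ x → ∀ y : A₂, T x |y| = |T x y|)
    (hunit : T 1 1 = 1) :
    ∀ a₁ x₁ : A₁, ∀ a₂ x₂ : A₂,
      T (a₁ * x₁) (a₂ * x₂) = T a₁ a₂ * T x₁ x₂ := by
  have hA₁ : IsFAlgebra A₁ := ⟨h₁mulpos, h₁falg⟩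
  have hA₂ : IsFAlgebra A₂ := ⟨h₂mulpos, h₂falg⟩
  let B : A₁ →+ A₂ →+ ℝ := LinearMap.toAddMonoidHom'.comp T.toAddMonoidHom
  have factor : ∀ x y, T x y = T x 1 * T 1 y :=
    apply_eq_apply_one_mul_apply_one (T := B) hA₂ hbim₁ hbim₂ hunit
  have mul₁ : ∀ x y, T (x * y) 1 = T x 1 * T y 1 :=
    hA₁.map_mul (φ := B.flip 1) (hbim₁ 1 hA₂.zero_le_one) hunit
  have mul₂ : ∀ x y, T 1 (x * y) = T 1 x * T 1 y :=
    hA₂.map_mul (φ := B 1) (hbim₂ 1 hA₁.zero_le_one) hunit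
  intro a₁ x₁ a₂ x₂
  rw [factor (a₁ * x₁), mul₁, mul₂, factor a₁ a₂, factor x₁ x₂]
  ring

/-- A real-valued Riesz bimorphism on a product of unital Archimedean
f-algebras sending the pair of units to `1` is multiplicative. -/
theorem riesz_bimorphism_real_multiplicative
    {A₁ A₂ : Type*}
    [Ring A₁] [Lattice A₁] [CovariantClass A₁ A₁ (· + ·) (· ≤ ·)] [Module ℝ A₁]
    [Ring A₂] [Lattice A₂] [CovariantClass A₂ A₂ (· + ·) (· ≤ ·)] [Module ℝ A₂]
    (h₁mulpos : ∀ x y : A₁, 0 ≤ x → 0 ≤ y → 0 ≤ x * y)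
    (h₁falg : ∀ f g h : A₁, f ⊓ g = 0 → 0 ≤ h → (f * h) ⊓ g = 0 ∧ (h * f) ⊓ g = 0)
    (h₁arch : ∀ x y : A₁, (∀ n : ℕ, n • x ≤ y) → x ≤ 0)
    (h₂mulpos : ∀ x y : A₂, 0 ≤ x → 0 ≤ y → 0 ≤ x * y)
    (h₂falg : ∀ f g h : A₂, f ⊓ g = 0 → 0 ≤ h → (f * h) ⊓ g = 0 ∧ (h * f) ⊓ g = 0)
    (h₂arch : ∀ x y : A₂, (∀ n : ℕ, n • x ≤ y) → x ≤ 0)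
    (T : A₁ →ₗ[ℝ] A₂ →ₗ[ℝ] ℝ)
    -- `T` is a Riesz bimorphism:
    (hbim₁ : ∀ y : A₂, 0 ≤ y → ∀ x : A₁, T |x| y = |T x y|)
    (hbim₂ : ∀ x : A₁, 0 ≤ x → ∀ y : A₂, T x |y| = |T x y|)
    (hunit : T 1 1 = 1) :
    ∀ a₁ x₁ : A₁, ∀ a₂ x₂ : A₂,
      T (a₁ * x₁) (a₂ * x₂) = T a₁ a₂ * T x₁ x₂ :=
  riesz_bimorphism_real_multiplicative_general h₁mulpos h₁falg h₂mulpos h₂falg T hbim₁ hbim₂ hunit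
end

section
/- In a semiprime f-algebra, for all a, b the element a⁻b⁻ is disjoint from z = (a + a³)⁺ + (b + b³)⁺, i.e., (a⁻b⁻) ∧ z = 0; consequently (ab)⁺ ∧ z = a⁺b⁺ ∧ z. -/
/-!
In an f-algebra, multiplying by a positive element preserves disjointness from a fixed element.
Hence disjoint positive elements multiply to zero, and all powers of `a⁺` stay disjoint from all
powers of `a⁻`. So `a + a³ = (a⁺ + a⁺³) - (a⁻ + a⁻³)` and
`ab = (a⁺b⁺ + a⁻b⁻) - (a⁺b⁻ + a⁻b⁺)` are differences of disjoint positive elements, which gives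
`(a + a³)⁺ = a⁺ + a⁺³` (disjoint from `a⁻`) and `(ab)⁺ = a⁺b⁺ + a⁻b⁻`. Thus `a⁻b⁻` is disjoint
from both summands of `z`, and dropping it from `(ab)⁺` does not change the infimum with `z`.
-/

section LatticeOrderedGroup

variable {G : Type*} [AddCommGroup G] [Lattice G] [IsOrderedAddMonoid G] {x y z : G}

theorem add_inf_le_inf_add_inf (hx : 0 ≤ x) (hy : 0 ≤ y) (hz : 0 ≤ z) :
    (x + y) ⊓ z ≤ x ⊓ z + y ⊓ z := by
  rw [inf_add, add_inf, add_inf]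
  refine le_inf (le_inf inf_le_left ?_) (le_inf ?_ ?_)
  · exact inf_le_right.trans (le_add_of_nonneg_left hx)
  · exact inf_le_right.trans (le_add_of_nonneg_right hy)
  · exact inf_le_right.trans (le_add_of_nonneg_left hz)

theorem add_inf_eq_left_of_inf_eq_zero (hx : 0 ≤ x) (hy : 0 ≤ y) (hz : 0 ≤ z)
    (hyz : y ⊓ z = 0) : (x + y) ⊓ z = x ⊓ z := by
  refine le_antisymm ?_ (inf_le_inf_right z (le_add_of_nonneg_right hy))
  simpa [hyz] using add_inf_le_inf_add_inf hx hy hz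

theorem add_inf_eq_zero (hx : 0 ≤ x) (hy : 0 ≤ y) (hz : 0 ≤ z) (hxz : x ⊓ z = 0)
    (hyz : y ⊓ z = 0) : (x + y) ⊓ z = 0 := by
  rw [add_inf_eq_left_of_inf_eq_zero hx hy hz hyz, hxz]

theorem inf_add_eq_zero (hx : 0 ≤ x) (hy : 0 ≤ y) (hz : 0 ≤ z) (hxy : x ⊓ y = 0)
    (hxz : x ⊓ z = 0) : x ⊓ (y + z) = 0 := by
  rw [inf_comm] at hxy hxz ⊢
  exact add_inf_eq_zero hy hz hx hxy hxz

theorem add_inf_add_eq_zero {x₁ x₂ y₁ y₂ : G} (hx₁ : 0 ≤ x₁) (hx₂ : 0 ≤ x₂) (hy₁ : 0 ≤ y₁)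
    (hy₂ : 0 ≤ y₂) (h₁₁ : x₁ ⊓ y₁ = 0) (h₁₂ : x₁ ⊓ y₂ = 0) (h₂₁ : x₂ ⊓ y₁ = 0)
    (h₂₂ : x₂ ⊓ y₂ = 0) : (x₁ + x₂) ⊓ (y₁ + y₂) = 0 :=
  add_inf_eq_zero hx₁ hx₂ (add_nonneg hy₁ hy₂) (inf_add_eq_zero hx₁ hy₁ hy₂ h₁₁ h₁₂)
    (inf_add_eq_zero hx₂ hy₁ hy₂ h₂₁ h₂₂)

theorem posPart_sub_of_inf_eq_zero (h : x ⊓ y = 0) : (x - y)⁺ = x := by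
  have hsup : x ⊔ y = x + y := by simpa [h] using inf_add_sup x y
  have := sup_eq_add_posPart_sub x y
  rw [hsup, add_comm y] at this
  exact (add_right_cancel this).symm

end LatticeOrderedGroup

theorem sub_pow_three_of_mul_eq_zero {R : Type*} [Ring R] {x y : R} (hxy : x * y = 0)
    (hyx : y * x = 0) : (x - y) ^ 3 = x ^ 3 - y ^ 3 := by
  have : (x - y) ^ 3 = x ^ 3 - y ^ 3 - x * (x * y) - x * y * x + x * y * y - y * x * x
      + y * x * y + y * (y * x) := by noncomm_ring
  simp only [this, hxy, hyx, mul_zero, zero_mul, sub_zero, add_zero]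

/-- The multiplicative axioms of an f-algebra; the lattice-ordered group structure is assumed
separately through `IsOrderedAddMonoid`. -/
class IsFAlgebra_s13 (A : Type*) [Ring A] [Lattice A] : Prop where
  protected mul_nonneg {x y : A} : 0 ≤ x → 0 ≤ y → 0 ≤ x * y
  mul_right_inf_eq_zero {f g h : A} : f ⊓ g = 0 → 0 ≤ h → f * h ⊓ g = 0
  mul_left_inf_eq_zero {f g h : A} : f ⊓ g = 0 → 0 ≤ h → h * f ⊓ g = 0

namespace IsFAlgebra_s13

variable {A : Type*} [Ring A] [Lattice A] [IsFAlgebra_s13 A] {f g h x y : A}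

theorem inf_mul_right_eq_zero (hfg : f ⊓ g = 0) (hh : 0 ≤ h) : f ⊓ g * h = 0 := by
  rw [inf_comm] at hfg ⊢
  exact mul_right_inf_eq_zero hfg hh

theorem inf_mul_left_eq_zero (hfg : f ⊓ g = 0) (hh : 0 ≤ h) : f ⊓ h * g = 0 := by
  rw [inf_comm] at hfg ⊢
  exact mul_left_inf_eq_zero hfg hh

theorem mul_right_inf_mul_right_eq_zero (hfg : f ⊓ g = 0) (hh : 0 ≤ h) : f * h ⊓ g * h = 0 :=
  inf_mul_right_eq_zero (mul_right_inf_eq_zero hfg hh) hh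

theorem mul_left_inf_mul_left_eq_zero (hfg : f ⊓ g = 0) (hh : 0 ≤ h) : h * f ⊓ h * g = 0 :=
  inf_mul_left_eq_zero (mul_left_inf_eq_zero hfg hh) hh

theorem mul_eq_zero_of_inf_eq_zero_s13 (hfg : f ⊓ g = 0) (hf : 0 ≤ f) (hg : 0 ≤ g) : f * g = 0 := by
  simpa using inf_mul_left_eq_zero (mul_right_inf_eq_zero hfg hg) hf

theorem pow_succ_nonneg (hx : 0 ≤ x) : ∀ k : ℕ, 0 ≤ x ^ (k + 1)
  | 0 => by rwa [pow_one]
  | k + 1 => by rw [pow_succ]; exact IsFAlgebra_s13.mul_nonneg (pow_succ_nonneg hx k) hx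

theorem pow_succ_inf_eq_zero (hxy : x ⊓ y = 0) (hx : 0 ≤ x) : ∀ k : ℕ, x ^ (k + 1) ⊓ y = 0
  | 0 => by rwa [pow_one]
  | k + 1 => by rw [pow_succ]; exact mul_right_inf_eq_zero (pow_succ_inf_eq_zero hxy hx k) hx

variable [IsOrderedAddMonoid A]

theorem add_pow_three_inf_add_pow_three_eq_zero (hxy : x ⊓ y = 0) (hx : 0 ≤ x) (hy : 0 ≤ y) :
    (x + x ^ 3) ⊓ (y + y ^ 3) = 0 := by
  have hx₃y : x ^ 3 ⊓ y = 0 := pow_succ_inf_eq_zero hxy hx 2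
  have hy₃x : y ^ 3 ⊓ x = 0 := pow_succ_inf_eq_zero (by rwa [inf_comm]) hy 2
  have hy₃x₃ : y ^ 3 ⊓ x ^ 3 = 0 := pow_succ_inf_eq_zero (by rwa [inf_comm]) hy 2
  rw [inf_comm] at hy₃x hy₃x₃
  exact add_inf_add_eq_zero hx (pow_succ_nonneg hx 2) hy (pow_succ_nonneg hy 2) hxy hy₃x hx₃y hy₃x₃

theorem posPart_add_pow_three (a : A) : (a + a ^ 3)⁺ = a⁺ + a⁺ ^ 3 := by
  have ha : a = a⁺ - a⁻ := (posPart_sub_negPart a).symm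
  have hpn := posPart_inf_negPart_eq_zero a
  have hcube : a ^ 3 = a⁺ ^ 3 - a⁻ ^ 3 := by
    nth_rw 1 [ha]
    refine sub_pow_three_of_mul_eq_zero ?_ ?_
    · exact mul_eq_zero_of_inf_eq_zero_s13 hpn (posPart_nonneg a) (negPart_nonneg a)
    · exact mul_eq_zero_of_inf_eq_zero_s13 (by rwa [inf_comm]) (negPart_nonneg a) (posPart_nonneg a)
  have hsplit : a + a ^ 3 = (a⁺ + a⁺ ^ 3) - (a⁻ + a⁻ ^ 3) := by
    rw [hcube]
    nth_rw 1 [ha]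
    abel
  rw [hsplit, posPart_sub_of_inf_eq_zero]
  exact add_pow_three_inf_add_pow_three_eq_zero hpn (posPart_nonneg a) (negPart_nonneg a)

theorem negPart_inf_posPart_add_pow_three (a : A) : a⁻ ⊓ (a + a ^ 3)⁺ = 0 := by
  have hpn := posPart_inf_negPart_eq_zero a
  rw [posPart_add_pow_three]
  refine inf_add_eq_zero (negPart_nonneg a) (posPart_nonneg a)
    (pow_succ_nonneg (posPart_nonneg a) 2) (by rwa [inf_comm]) ?_
  rw [inf_comm]
  exact pow_succ_inf_eq_zero hpn (posPart_nonneg a) 2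

theorem posPart_mul (a b : A) : (a * b)⁺ = a⁺ * b⁺ + a⁻ * b⁻ := by
  have ha := posPart_inf_negPart_eq_zero a
  have hb := posPart_inf_negPart_eq_zero b
  have ha' : a⁻ ⊓ a⁺ = 0 := by rwa [inf_comm]
  have hb' : b⁻ ⊓ b⁺ = 0 := by rwa [inf_comm]
  have hsplit : a * b = (a⁺ * b⁺ + a⁻ * b⁻) - (a⁺ * b⁻ + a⁻ * b⁺) := by
    conv_lhs => rw [← posPart_sub_negPart a, ← posPart_sub_negPart b]
    noncomm_ring
  rw [hsplit, posPart_sub_of_inf_eq_zero]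
  have hpa := posPart_nonneg a
  have hna := negPart_nonneg a
  have hpb := posPart_nonneg b
  have hnb := negPart_nonneg b
  exact add_inf_add_eq_zero (IsFAlgebra_s13.mul_nonneg hpa hpb) (IsFAlgebra_s13.mul_nonneg hna hnb)
    (IsFAlgebra_s13.mul_nonneg hpa hnb) (IsFAlgebra_s13.mul_nonneg hna hpb)
    (mul_left_inf_mul_left_eq_zero hb hpa) (mul_right_inf_mul_right_eq_zero ha hpb)
    (mul_right_inf_mul_right_eq_zero ha' hnb) (mul_left_inf_mul_left_eq_zero hb' hna)

end IsFAlgebra_s13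

open IsFAlgebra_s13 in
theorem negPart_mul_negPart_disjoint_general
    {A : Type*} [Ring A] [Lattice A] [CovariantClass A A (· + ·) (· ≤ ·)]
    (hmulpos : ∀ x y : A, 0 ≤ x → 0 ≤ y → 0 ≤ x * y)
    (hfalg : ∀ f g h : A, f ⊓ g = 0 → 0 ≤ h → (f * h) ⊓ g = 0 ∧ (h * f) ⊓ g = 0)
    (a b : A) :
    ((((-a) ⊔ 0) * ((-b) ⊔ 0)) ⊓ (((a + a ^ 3) ⊔ 0) + ((b + b ^ 3) ⊔ 0)) = 0) ∧
      (((a * b) ⊔ 0) ⊓ (((a + a ^ 3) ⊔ 0) + ((b + b ^ 3) ⊔ 0))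
        = ((a ⊔ 0) * (b ⊔ 0)) ⊓ (((a + a ^ 3) ⊔ 0) + ((b + b ^ 3) ⊔ 0))) := by
  have : IsOrderedAddMonoid A :=
    { add_le_add_left := fun _ _ h c => by simpa only [add_comm _ c] using add_le_add_right h c }
  have : IsFAlgebra_s13 A :=
    ⟨hmulpos _ _, fun hfg hh => (hfalg _ _ _ hfg hh).1, fun hfg hh => (hfalg _ _ _ hfg hh).2⟩
  change a⁻ * b⁻ ⊓ ((a + a ^ 3)⁺ + (b + b ^ 3)⁺) = 0 ∧
    (a * b)⁺ ⊓ ((a + a ^ 3)⁺ + (b + b ^ 3)⁺) = a⁺ * b⁺ ⊓ ((a + a ^ 3)⁺ + (b + b ^ 3)⁺)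
  have hz : 0 ≤ (a + a ^ 3)⁺ + (b + b ^ 3)⁺ := add_nonneg (posPart_nonneg _) (posPart_nonneg _)
  have hdisj : a⁻ * b⁻ ⊓ ((a + a ^ 3)⁺ + (b + b ^ 3)⁺) = 0 :=
    inf_add_eq_zero (IsFAlgebra_s13.mul_nonneg (negPart_nonneg a) (negPart_nonneg b))
      (posPart_nonneg _) (posPart_nonneg _)
      (mul_right_inf_eq_zero (negPart_inf_posPart_add_pow_three a) (negPart_nonneg b))
      (mul_left_inf_eq_zero (negPart_inf_posPart_add_pow_three b) (negPart_nonneg a))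
  refine ⟨hdisj, ?_⟩
  rw [posPart_mul]
  exact add_inf_eq_left_of_inf_eq_zero
    (IsFAlgebra_s13.mul_nonneg (posPart_nonneg a) (posPart_nonneg b))
    (IsFAlgebra_s13.mul_nonneg (negPart_nonneg a) (negPart_nonneg b)) hz hdisj

/-- In a semiprime Archimedean f-algebra, `a⁻b⁻` is disjoint from
`z = (a + a³)⁺ + (b + b³)⁺`, and consequently `(ab)⁺ ⊓ z = a⁺b⁺ ⊓ z`. -/
theorem negPart_mul_negPart_disjoint
    {A : Type*} [Ring A] [Lattice A] [CovariantClass A A (· + ·) (· ≤ ·)]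
    (hmulpos : ∀ x y : A, 0 ≤ x → 0 ≤ y → 0 ≤ x * y)
    (hfalg : ∀ f g h : A, f ⊓ g = 0 → 0 ≤ h → (f * h) ⊓ g = 0 ∧ (h * f) ⊓ g = 0)
    (hsemiprime : ∀ a : A, (∃ n : ℕ, 0 < n ∧ a ^ n = 0) → a = 0)
    (harch : ∀ x y : A, (∀ n : ℕ, n • x ≤ y) → x ≤ 0)
    (a b : A) :
    ((((-a) ⊔ 0) * ((-b) ⊔ 0)) ⊓ (((a + a ^ 3) ⊔ 0) + ((b + b ^ 3) ⊔ 0)) = 0) ∧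
      (((a * b) ⊔ 0) ⊓ (((a + a ^ 3) ⊔ 0) + ((b + b ^ 3) ⊔ 0))
        = ((a ⊔ 0) * (b ⊔ 0)) ⊓ (((a + a ^ 3) ⊔ 0) + ((b + b ^ 3) ⊔ 0))) :=
  negPart_mul_negPart_disjoint_general hmulpos hfalg a b
end

section
/- Let A be a semiprime f-algebra, B a subalgebra of A, and f, g ∈ B. Then f⁺g⁺, f⁺g⁻, f⁻g⁺, f⁻g⁻, and f·|g| all belong to the Riesz subspace R(B) generated by B. -/
/-!
In an f-ring the positive part of a product splits as `(f g)⁺ = f⁺ g⁺ + f⁻ g⁻`, and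
`(f + f³)⁺ = f⁺ + (f⁺)³`. The element `f⁺ g⁺` lies below `f⁺ + (f⁺)³ + g⁺ + (g⁺)³`
(because `u v ≤ u² + v²` and `u² ≤ u + u³` for `u, v ≥ 0`), while `f⁻ g⁻` is disjoint from
it, so `f⁺ g⁺ = (f g)⁺ ⊓ ((f + f³)⁺ + (g + g³)⁺)`. The right-hand side is built from elements
of `B` by positive parts, sums and infima, hence lies in `R(B)`. Replacing `f, g` by `±f, ±g`
gives the other three products, and `f |g| = f⁺ g⁺ - f⁻ g⁺ + f⁺ g⁻ - f⁻ g⁻`.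
-/

section LatticeOrderedGroup

variable {α : Type*} [AddCommGroup α] [Lattice α] [AddLeftMono α] {a b c : α}

theorem inf_add_eq_zero_s14 (hb : a ⊓ b = 0) (hc : a ⊓ c = 0) : a ⊓ (b + c) = 0 := by
  have ha0 : 0 ≤ a := hb ▸ inf_le_left
  have hb0 : 0 ≤ b := hb ▸ inf_le_right
  have hc0 : 0 ≤ c := hc ▸ inf_le_right
  have hle : a ⊓ (b + c) ≤ c :=
    calc a ⊓ (b + c) ≤ (a + c) ⊓ (b + c) := inf_le_inf_right _ (le_add_of_nonneg_right hc0)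
      _ = a ⊓ b + c := (inf_add a b c).symm
      _ = c := by rw [hb, zero_add]
  exact le_antisymm ((le_inf inf_le_left hle).trans hc.le) (le_inf ha0 (add_nonneg hb0 hc0))

theorem add_inf_eq_zero_s14 (ha : a ⊓ c = 0) (hb : b ⊓ c = 0) : (a + b) ⊓ c = 0 := by
  rw [inf_comm] at ha hb ⊢
  exact inf_add_eq_zero_s14 ha hb

theorem posPart_sub_eq_of_inf_eq_zero (h : a ⊓ b = 0) : (a - b)⁺ = a := by
  have hsup : a ⊔ b = a + b := by rw [← inf_add_sup a b, h, zero_add]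
  calc (a - b)⁺ = a ⊔ b - b := by rw [posPart_def, sup_sub, sub_self]
    _ = a := by rw [hsup, add_sub_cancel_right]

theorem add_inf_eq_left_of_inf_eq_zero_s14 (ha : 0 ≤ a) (hac : a ≤ c) (hbc : b ⊓ c = 0) :
    (a + b) ⊓ c = a := by
  have hb : 0 ≤ b := hbc ▸ inf_le_left
  refine le_antisymm ?_ (le_inf (le_add_of_nonneg_right hb) hac)
  calc (a + b) ⊓ c ≤ (a + b) ⊓ (a + c) := inf_le_inf_left _ (le_add_of_nonneg_left ha)
    _ = a + b ⊓ c := (add_inf b c a).symm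
    _ = a := by rw [hbc, add_zero]

end LatticeOrderedGroup

namespace Submodule

variable {𝕜 M : Type*} [DivisionRing 𝕜] [NeZero (2 : 𝕜)] [AddCommGroup M] [Lattice M]
  [AddLeftMono M] [Module 𝕜 M] {S : Submodule 𝕜 M}

theorem posPart_mem_of_forall_abs_mem (hS : ∀ z ∈ S, |z| ∈ S) {x : M} (hx : x ∈ S) :
    x⁺ ∈ S := by
  have hx' : x⁺ = (2⁻¹ : 𝕜) • (x + |x|) := by
    rw [add_abs_eq_two_nsmul_posPart, two_nsmul, ← two_smul 𝕜, inv_smul_smul₀ two_ne_zero]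
  rw [hx']
  exact S.smul_mem _ (S.add_mem hx (hS x hx))

theorem inf_mem_of_forall_abs_mem (hS : ∀ z ∈ S, |z| ∈ S) {x y : M} (hx : x ∈ S) (hy : y ∈ S) :
    x ⊓ y ∈ S := by
  rw [inf_eq_sub_posPart_sub]
  exact S.sub_mem hx (posPart_mem_of_forall_abs_mem hS (S.sub_mem hx hy))

end Submodule

structure IsFRing (A : Type*) [Ring A] [Lattice A] : Prop where
  mul_nonneg : ∀ {x y : A}, 0 ≤ x → 0 ≤ y → 0 ≤ x * y
  mul_right_inf_eq_zero : ∀ {x y c : A}, x ⊓ y = 0 → 0 ≤ c → (x * c) ⊓ y = 0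
  mul_left_inf_eq_zero : ∀ {x y c : A}, x ⊓ y = 0 → 0 ≤ c → (c * x) ⊓ y = 0

namespace IsFRing

variable {A : Type*} [Ring A] [Lattice A] (hA : IsFRing A) {x y c : A}
include hA

theorem mul_inf_mul_right_eq_zero (h : x ⊓ y = 0) (hc : 0 ≤ c) : (x * c) ⊓ (y * c) = 0 := by
  have hxc := hA.mul_right_inf_eq_zero h hc
  rw [inf_comm] at hxc ⊢
  exact hA.mul_right_inf_eq_zero hxc hc

theorem mul_inf_mul_left_eq_zero (h : x ⊓ y = 0) (hc : 0 ≤ c) : (c * x) ⊓ (c * y) = 0 := by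
  have hcx := hA.mul_left_inf_eq_zero h hc
  rw [inf_comm] at hcx ⊢
  exact hA.mul_left_inf_eq_zero hcx hc

theorem mul_eq_zero_of_inf_eq_zero (h : x ⊓ y = 0) : x * y = 0 := by
  have hx : 0 ≤ x := h ▸ inf_le_left
  have hy : 0 ≤ y := h ▸ inf_le_right
  have hxy := hA.mul_right_inf_eq_zero h hy
  rw [inf_comm] at hxy
  have hxyxy := hA.mul_left_inf_eq_zero hxy hx
  rwa [inf_idem] at hxyxy

variable [AddLeftMono A]

theorem posPart_mul_negPart (a : A) : a⁺ * a⁻ = 0 :=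
  hA.mul_eq_zero_of_inf_eq_zero (posPart_inf_negPart_eq_zero a)

theorem negPart_mul_posPart (a : A) : a⁻ * a⁺ = 0 :=
  hA.mul_eq_zero_of_inf_eq_zero (by rw [inf_comm, posPart_inf_negPart_eq_zero])

theorem sq_eq_posPart_sq_add_negPart_sq (a : A) : a ^ 2 = a⁺ ^ 2 + a⁻ ^ 2 := by
  calc a ^ 2 = (a⁺ - a⁻) ^ 2 := by rw [posPart_sub_negPart]
    _ = a⁺ ^ 2 + a⁻ ^ 2 - (a⁺ * a⁻ + a⁻ * a⁺) := by noncomm_ring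
    _ = a⁺ ^ 2 + a⁻ ^ 2 := by rw [hA.posPart_mul_negPart, hA.negPart_mul_posPart, add_zero,
      sub_zero]

theorem sq_nonneg (a : A) : 0 ≤ a ^ 2 := by
  rw [hA.sq_eq_posPart_sq_add_negPart_sq, sq, sq]
  exact add_nonneg (hA.mul_nonneg (posPart_nonneg a) (posPart_nonneg a))
    (hA.mul_nonneg (negPart_nonneg a) (negPart_nonneg a))

theorem zero_le_one : (0 : A) ≤ 1 := one_pow (M := A) 2 ▸ hA.sq_nonneg 1

theorem posPart_mul_of_nonneg (hc : 0 ≤ c) : (x * c)⁺ = x⁺ * c := by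
  have hx : x * c = x⁺ * c - x⁻ * c := by rw [← sub_mul, posPart_sub_negPart]
  rw [hx]
  exact posPart_sub_eq_of_inf_eq_zero
    (hA.mul_inf_mul_right_eq_zero (posPart_inf_negPart_eq_zero x) hc)

theorem posPart_add_pow_three (a : A) : (a + a ^ 3)⁺ = a⁺ + a⁺ ^ 3 := by
  have hc : 0 ≤ 1 + a ^ 2 := add_nonneg hA.zero_le_one (hA.sq_nonneg a)
  calc (a + a ^ 3)⁺ = (a * (1 + a ^ 2))⁺ := by noncomm_ring
    _ = a⁺ * (1 + (a⁺ ^ 2 + a⁻ ^ 2)) := by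
      rw [hA.posPart_mul_of_nonneg hc, hA.sq_eq_posPart_sq_add_negPart_sq]
    _ = a⁺ + a⁺ ^ 3 + a⁺ * a⁻ * a⁻ := by noncomm_ring
    _ = a⁺ + a⁺ ^ 3 := by rw [hA.posPart_mul_negPart, zero_mul, add_zero]

theorem posPart_mul (a b : A) : (a * b)⁺ = a⁺ * b⁺ + a⁻ * b⁻ := by
  have hab : a * b = (a⁺ * b⁺ + a⁻ * b⁻) - (a⁺ * b⁻ + a⁻ * b⁺) := by
    conv_lhs => rw [← posPart_sub_negPart a, ← posPart_sub_negPart b]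
    noncomm_ring
  have ha := posPart_inf_negPart_eq_zero a
  have hb := posPart_inf_negPart_eq_zero b
  have ha' : a⁻ ⊓ a⁺ = 0 := by rw [inf_comm, ha]
  have hb' : b⁻ ⊓ b⁺ = 0 := by rw [inf_comm, hb]
  rw [hab]
  exact posPart_sub_eq_of_inf_eq_zero <| add_inf_eq_zero_s14
    (inf_add_eq_zero_s14 (hA.mul_inf_mul_left_eq_zero hb (posPart_nonneg a))
      (hA.mul_inf_mul_right_eq_zero ha (posPart_nonneg b)))
    (inf_add_eq_zero_s14 (hA.mul_inf_mul_right_eq_zero ha' (negPart_nonneg b))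
      (hA.mul_inf_mul_left_eq_zero hb' (negPart_nonneg a)))

theorem mul_le_sq_add_sq (hx : 0 ≤ x) (hy : 0 ≤ y) : x * y ≤ x ^ 2 + y ^ 2 := by
  have h := hA.sq_nonneg (x - y)
  rw [show (x - y) ^ 2 = x ^ 2 + y ^ 2 - (x * y + y * x) by noncomm_ring, sub_nonneg] at h
  exact (le_add_of_nonneg_right (hA.mul_nonneg hy hx)).trans h

theorem sq_le_add_pow_three (hx : 0 ≤ x) : x ^ 2 ≤ x + x ^ 3 := by
  have h := hA.mul_nonneg hx (hA.sq_nonneg (x - 1))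
  rw [show x * (x - 1) ^ 2 = x + x ^ 3 - (x ^ 2 + x ^ 2) by noncomm_ring, sub_nonneg] at h
  exact (le_add_of_nonneg_left (hA.sq_nonneg x)).trans h

theorem inf_add_pow_three_eq_zero (h : y ⊓ x = 0) : y ⊓ (x + x ^ 3) = 0 := by
  refine inf_add_eq_zero_s14 h ?_
  rw [inf_comm] at h
  rw [inf_comm, pow_succ']
  exact hA.mul_right_inf_eq_zero h (hA.sq_nonneg x)

theorem posPart_mul_posPart (a b : A) :
    a⁺ * b⁺ = (a * b)⁺ ⊓ ((a + a ^ 3)⁺ + (b + b ^ 3)⁺) := by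
  rw [hA.posPart_mul, hA.posPart_add_pow_three, hA.posPart_add_pow_three]
  have hle : a⁺ * b⁺ ≤ a⁺ + a⁺ ^ 3 + (b⁺ + b⁺ ^ 3) :=
    (hA.mul_le_sq_add_sq (posPart_nonneg a) (posPart_nonneg b)).trans
      (add_le_add (hA.sq_le_add_pow_three (posPart_nonneg a))
        (hA.sq_le_add_pow_three (posPart_nonneg b)))
  have hdisj : a⁻ * b⁻ ⊓ (a⁺ + a⁺ ^ 3 + (b⁺ + b⁺ ^ 3)) = 0 := by
    have ha' : a⁻ ⊓ a⁺ = 0 := by rw [inf_comm, posPart_inf_negPart_eq_zero]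
    have hb' : b⁻ ⊓ b⁺ = 0 := by rw [inf_comm, posPart_inf_negPart_eq_zero]
    exact inf_add_eq_zero_s14
      (hA.inf_add_pow_three_eq_zero (hA.mul_right_inf_eq_zero ha' (negPart_nonneg b)))
      (hA.inf_add_pow_three_eq_zero (hA.mul_left_inf_eq_zero hb' (negPart_nonneg a)))
  exact (add_inf_eq_left_of_inf_eq_zero_s14
    (hA.mul_nonneg (posPart_nonneg a) (posPart_nonneg b)) hle hdisj).symm

theorem posPart_mul_posPart_mem {𝕜 : Type*} [DivisionRing 𝕜] [NeZero (2 : 𝕜)] [Module 𝕜 A]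
    {B S : Submodule 𝕜 A} (hB : ∀ x ∈ B, ∀ y ∈ B, x * y ∈ B) (hBS : B ≤ S)
    (hS : ∀ z ∈ S, |z| ∈ S) {a b : A} (ha : a ∈ B) (hb : b ∈ B) : a⁺ * b⁺ ∈ S := by
  have hpos : ∀ x ∈ B, x⁺ ∈ S := fun x hx => S.posPart_mem_of_forall_abs_mem hS (hBS hx)
  have hcube : ∀ x ∈ B, x + x ^ 3 ∈ B := fun x hx =>
    B.add_mem hx (pow_three x ▸ hB _ hx _ (hB _ hx _ hx))
  rw [hA.posPart_mul_posPart]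
  exact S.inf_mem_of_forall_abs_mem hS (hpos _ (hB _ ha _ hb))
    (S.add_mem (hpos _ (hcube a ha)) (hpos _ (hcube b hb)))

end IsFRing

theorem parts_products_mem_rieszSubspace_general
    {A : Type*} [Ring A] [Lattice A] [CovariantClass A A (· + ·) (· ≤ ·)]
    [Module ℝ A]
    (hmulpos : ∀ x y : A, 0 ≤ x → 0 ≤ y → 0 ≤ x * y)
    (hfalg : ∀ f g h : A, f ⊓ g = 0 → 0 ≤ h → (f * h) ⊓ g = 0 ∧ (h * f) ⊓ g = 0)
    (B : Submodule ℝ A)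
    (hBmul : ∀ x ∈ B, ∀ y ∈ B, x * y ∈ B)
    (RB : Submodule ℝ A)
    (hRB : RB = sInf {S : Submodule ℝ A | B ≤ S ∧ ∀ z ∈ S, |z| ∈ S})
    (f g : A) (hf : f ∈ B) (hg : g ∈ B) :
    (f ⊔ 0) * (g ⊔ 0) ∈ RB ∧
      (f ⊔ 0) * ((-g) ⊔ 0) ∈ RB ∧
      ((-f) ⊔ 0) * (g ⊔ 0) ∈ RB ∧
      ((-f) ⊔ 0) * ((-g) ⊔ 0) ∈ RB ∧
      f * |g| ∈ RB := by
  have hA : IsFRing A := ⟨hmulpos _ _, fun h hc => (hfalg _ _ _ h hc).1,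
    fun h hc => (hfalg _ _ _ h hc).2⟩
  have hBR : B ≤ RB := hRB ▸ le_sInf fun S hS => hS.1
  have hRabs : ∀ z ∈ RB, |z| ∈ RB := by
    subst hRB
    simp only [Submodule.mem_sInf]
    exact fun z hz S hS => hS.2 z (hz S hS)
  have key : ∀ a ∈ B, ∀ b ∈ B, a⁺ * b⁺ ∈ RB := fun a ha b hb =>
    hA.posPart_mul_posPart_mem hBmul hBR hRabs ha hb
  have hf' := B.neg_mem hf
  have hg' := B.neg_mem hg
  refine ⟨key f hf g hg, key f hf _ hg', key _ hf' g hg, key _ hf' _ hg', ?_⟩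
  have hfg : f * |g| = f⁺ * g⁺ - (-f)⁺ * g⁺ + (f⁺ * (-g)⁺ - (-f)⁺ * (-g)⁺) := by
    rw [posPart_neg, posPart_neg, ← posPart_add_negPart g]
    conv_lhs => rw [← posPart_sub_negPart f]
    noncomm_ring
  rw [hfg]
  exact RB.add_mem (RB.sub_mem (key f hf g hg) (key _ hf' g hg))
    (RB.sub_mem (key f hf _ hg') (key _ hf' _ hg'))

/-- For a subalgebra `B` of a semiprime Archimedean f-algebra `A` and
`f, g ∈ B`, the elements `f⁺g⁺`, `f⁺g⁻`, `f⁻g⁺`, `f⁻g⁻` and `f·|g|` all lie in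
the Riesz subspace `R(B)` generated by `B`. -/
theorem parts_products_mem_rieszSubspace
    {A : Type*} [Ring A] [Lattice A] [CovariantClass A A (· + ·) (· ≤ ·)]
    [Module ℝ A]
    (hmulpos : ∀ x y : A, 0 ≤ x → 0 ≤ y → 0 ≤ x * y)
    (hfalg : ∀ f g h : A, f ⊓ g = 0 → 0 ≤ h → (f * h) ⊓ g = 0 ∧ (h * f) ⊓ g = 0)
    (hsemiprime : ∀ a : A, (∃ n : ℕ, 0 < n ∧ a ^ n = 0) → a = 0)
    (harch : ∀ x y : A, (∀ n : ℕ, n • x ≤ y) → x ≤ 0)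
    (B : Submodule ℝ A)
    (hBmul : ∀ x ∈ B, ∀ y ∈ B, x * y ∈ B)
    (RB : Submodule ℝ A)
    (hRB : RB = sInf {S : Submodule ℝ A | B ≤ S ∧ ∀ z ∈ S, |z| ∈ S})
    (f g : A) (hf : f ∈ B) (hg : g ∈ B) :
    (f ⊔ 0) * (g ⊔ 0) ∈ RB ∧
      (f ⊔ 0) * ((-g) ⊔ 0) ∈ RB ∧
      ((-f) ⊔ 0) * (g ⊔ 0) ∈ RB ∧
      ((-f) ⊔ 0) * ((-g) ⊔ 0) ∈ RB ∧
      f * |g| ∈ RB :=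
  parts_products_mem_rieszSubspace_general hmulpos hfalg B hBmul RB hRB f g hf hg
end
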